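/- arXiv:1610.09432 — 3 statements merged into one kernel-verified Lean document; each statement's English description precedes it below -/
import Mathlib

section
/- Let K⁺ and K⁻ be entrywise-nonnegative real m×n matrices, b ∈ ℝ^m, and c ∈ ℝ^n. Consider the linear program max ⟨c, p − n⟩ over P = {(p, n) ∈ ℝ^n × ℝ^n : p ≥ 0, n ≥ 0, K⁺p + K⁻n ≤ b}. If this linear program has an optimal solution (a feasible point attaining the supremum of the objective over P), then it has an optimal solution (p*, n*) satisfying the complementarity condition p*_i n*_i = 0 for every coordinate i. -/
/-!
Replacing an optimal `(p, n)` by the positive and negative parts `((p - n)⁺, (p - n)⁻)` of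
its difference leaves `p - n`, hence the objective, unchanged, makes the two vectors
complementary, and lowers both coordinatewise; since `K⁺` and `K⁻` are nonnegative, lowering
them keeps `K⁺p + K⁻n ≤ b`.
-/

open Matrix

section PosNegPart

variable {α : Type*} [Lattice α] [AddGroup α] [AddLeftMono α] {a b : α}

lemma posPart_sub_le (ha : 0 ≤ a) (hb : 0 ≤ b) : (a - b)⁺ ≤ a :=
  sup_le (sub_le_self a hb) ha

lemma negPart_sub_le (ha : 0 ≤ a) (hb : 0 ≤ b) : (a - b)⁻ ≤ b :=
  sup_le (by rw [neg_sub]; exact sub_le_self b ha) hb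

end PosNegPart

lemma posPart_mul_negPart_eq_zero {R : Type*} [Ring R] [LinearOrder R] [IsOrderedRing R]
    (a : R) : a⁺ * a⁻ = 0 := by
  rcases le_total a 0 with ha | ha
  · rw [posPart_eq_zero.mpr ha, zero_mul]
  · rw [negPart_eq_zero.mpr ha, mul_zero]

lemma Matrix.mulVec_le_mulVec_of_nonneg {R m n : Type*} [Semiring R] [PartialOrder R]
    [IsOrderedRing R] [Fintype n] {K : Matrix m n R} (hK : ∀ i j, 0 ≤ K i j) {u v : n → R}
    (huv : u ≤ v) : K *ᵥ u ≤ K *ᵥ v :=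
  fun i => dotProduct_le_dotProduct_of_nonneg_left huv (hK i)

/-- If the linear program `max ⟨c, p − n⟩` over
`P = {(p,n) : p ≥ 0, n ≥ 0, K⁺p + K⁻n ≤ b}` (with `K⁺, K⁻` entrywise nonnegative)
has an optimal solution, then it has an optimal solution satisfying the
complementarity condition `p_i n_i = 0` for every `i`. -/
theorem lp_has_complementary_optimal {m n : ℕ}
    (Kp Kn : Matrix (Fin m) (Fin n) ℝ)
    (hKp : ∀ i j, 0 ≤ Kp i j) (hKn : ∀ i j, 0 ≤ Kn i j)
    (b : Fin m → ℝ) (c : Fin n → ℝ)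
    (P : Set ((Fin n → ℝ) × (Fin n → ℝ)))
    (hP : P = {pq | (∀ i, 0 ≤ pq.1 i) ∧ (∀ i, 0 ≤ pq.2 i) ∧
      ∀ i, (Kp *ᵥ pq.1 + Kn *ᵥ pq.2) i ≤ b i})
    (hopt : ∃ pq ∈ P, ∀ rs ∈ P, c ⬝ᵥ (rs.1 - rs.2) ≤ c ⬝ᵥ (pq.1 - pq.2)) :
    ∃ pq ∈ P, (∀ rs ∈ P, c ⬝ᵥ (rs.1 - rs.2) ≤ c ⬝ᵥ (pq.1 - pq.2)) ∧
      ∀ i, pq.1 i * pq.2 i = 0 := by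
  subst hP
  obtain ⟨⟨p, q⟩, ⟨hp, hq, hb⟩, hbest⟩ := hopt
  have hlower : Kp *ᵥ (p - q)⁺ + Kn *ᵥ (p - q)⁻ ≤ Kp *ᵥ p + Kn *ᵥ q :=
    add_le_add (mulVec_le_mulVec_of_nonneg hKp (posPart_sub_le hp hq))
      (mulVec_le_mulVec_of_nonneg hKn (negPart_sub_le hp hq))
  refine ⟨((p - q)⁺, (p - q)⁻),
    ⟨posPart_nonneg (p - q), negPart_nonneg (p - q), fun i => (hlower i).trans (hb i)⟩, ?_,
    fun i => posPart_mul_negPart_eq_zero (p i - q i)⟩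
  simpa only [posPart_sub_negPart] using hbest
end

section
/- Let K⁺ and K⁻ be entrywise-nonnegative real m×n matrices, b ∈ ℝ^m; let W = {w ∈ ℝ^n : K⁺w⁺ + K⁻w⁻ ≤ b componentwise} and P = {(p, n) ∈ ℝ^n × ℝ^n : p ≥ 0, n ≥ 0, K⁺p + K⁻n ≤ b}. Let ν ∈ ℝ^k, a ∈ ℝ^k, L ∈ ℝ, and let Λ be a real k×n matrix. Then the robust line-limit constraint ⟨ν, a − Λw⟩ ≤ L holds for every w ∈ W if and only if ⟨ν, a − Λ(p − n)⟩ ≤ L holds for every (p, n) ∈ P. -/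
/-!
`W` is the image of `P` under `(p, n) ↦ p − n`: every `w ∈ W` is `w⁺ − w⁻` with
`(w⁺, w⁻) ∈ P`, and conversely for `(p, n) ∈ P` we have `(p − n)⁺ ≤ p` and `(p − n)⁻ ≤ n`,
so `p − n ∈ W` because `K⁺` and `K⁻` are entrywise nonnegative.
-/

open Matrix

def vecPos {ι : Type*} (w : ι → ℝ) : ι → ℝ := fun i => max (w i) 0

def vecNeg {ι : Type*} (w : ι → ℝ) : ι → ℝ := fun i => max (-(w i)) 0

section PosNegParts

variable {ι : Type*}

theorem vecPos_nonneg (w : ι → ℝ) : 0 ≤ vecPos w := fun _ => le_max_right _ _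

theorem vecNeg_nonneg (w : ι → ℝ) : 0 ≤ vecNeg w := fun _ => le_max_right _ _

theorem vecPos_sub_vecNeg (w : ι → ℝ) : vecPos w - vecNeg w = w :=
  funext fun i => max_zero_sub_max_neg_zero_eq_self (w i)

theorem vecPos_sub_le {p q : ι → ℝ} (hp : 0 ≤ p) (hq : 0 ≤ q) : vecPos (p - q) ≤ p :=
  fun i => max_le (sub_le_self _ (hq i)) (hp i)

theorem vecNeg_sub_le {p q : ι → ℝ} (hp : 0 ≤ p) (hq : 0 ≤ q) : vecNeg (p - q) ≤ q :=
  fun i => max_le ((neg_sub (p i) (q i)).trans_le (sub_le_self _ (hp i))) (hq i)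

end PosNegParts

theorem Matrix.mulVec_mono_of_nonneg {R ι κ : Type*} [Semiring R] [PartialOrder R]
    [IsOrderedRing R] [Fintype κ] {K : Matrix ι κ R} (hK : ∀ i j, 0 ≤ K i j) :
    Monotone (K *ᵥ ·) :=
  fun _ _ huv i => dotProduct_le_dotProduct_of_nonneg_left huv (hK i)

section ConcentrationModel

variable {ι κ : Type*} [Fintype κ]

def concentrationModel (Kp Kn : Matrix ι κ ℝ) (b : ι → ℝ) : Set (κ → ℝ) :=
  {w | Kp *ᵥ vecPos w + Kn *ᵥ vecNeg w ≤ b}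

def splitPolytope (Kp Kn : Matrix ι κ ℝ) (b : ι → ℝ) : Set ((κ → ℝ) × (κ → ℝ)) :=
  {pq | 0 ≤ pq.1 ∧ 0 ≤ pq.2 ∧ Kp *ᵥ pq.1 + Kn *ᵥ pq.2 ≤ b}

theorem image_sub_splitPolytope {Kp Kn : Matrix ι κ ℝ}
    (hKp : ∀ i j, 0 ≤ Kp i j) (hKn : ∀ i j, 0 ≤ Kn i j) (b : ι → ℝ) :
    (fun pq => pq.1 - pq.2) '' splitPolytope Kp Kn b = concentrationModel Kp Kn b := by
  ext w
  constructor
  · rintro ⟨⟨p, q⟩, ⟨hp, hq, hb⟩, rfl⟩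
    exact (add_le_add (mulVec_mono_of_nonneg hKp (vecPos_sub_le hp hq))
      (mulVec_mono_of_nonneg hKn (vecNeg_sub_le hp hq))).trans hb
  · intro hw
    exact ⟨(vecPos w, vecNeg w), ⟨vecPos_nonneg w, vecNeg_nonneg w, hw⟩, vecPos_sub_vecNeg w⟩

end ConcentrationModel

/-- The robust line-limit constraint `⟨ν, a − Λw⟩ ≤ L` holds for every `w` in the
concentration model `W = {w : K⁺w⁺ + K⁻w⁻ ≤ b}` if and only if
`⟨ν, a − Λ(p − n)⟩ ≤ L` holds for every `(p, n)` in the LP feasible region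
`P = {(p,n) : p ≥ 0, n ≥ 0, K⁺p + K⁻n ≤ b}`. -/
theorem robust_line_limit_iff_lp {m n k : ℕ}
    (Kp Kn : Matrix (Fin m) (Fin n) ℝ)
    (hKp : ∀ i j, 0 ≤ Kp i j) (hKn : ∀ i j, 0 ≤ Kn i j)
    (b : Fin m → ℝ)
    (W : Set (Fin n → ℝ))
    (hW : W = {w | ∀ i, (Kp *ᵥ vecPos w + Kn *ᵥ vecNeg w) i ≤ b i})
    (P : Set ((Fin n → ℝ) × (Fin n → ℝ)))
    (hP : P = {pq | (∀ i, 0 ≤ pq.1 i) ∧ (∀ i, 0 ≤ pq.2 i) ∧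
      ∀ i, (Kp *ᵥ pq.1 + Kn *ᵥ pq.2) i ≤ b i})
    (ν a : Fin k → ℝ) (L : ℝ) (Λ : Matrix (Fin k) (Fin n) ℝ) :
    (∀ w ∈ W, ν ⬝ᵥ (a - Λ *ᵥ w) ≤ L) ↔
      (∀ pq ∈ P, ν ⬝ᵥ (a - Λ *ᵥ (pq.1 - pq.2)) ≤ L) := by
  rw [show W = concentrationModel Kp Kn b from hW, show P = splitPolytope Kp Kn b from hP,
    ← image_sub_splitPolytope hKp hKn b, Set.forall_mem_image]
end

section
/- Let K⁺ and K⁻ be entrywise-nonnegative real ℓ×(m+m') matrices, b ∈ ℝ^ℓ, and let W = {w ∈ ℝ^{m+m'} : K⁺w⁺ + K⁻w⁻ ≤ b componentwise}. Let Φ : ℝ^m → ℝ be continuous and monotone nondecreasing with respect to the componentwise order, and let E' ∈ ℝ with E' ≤ Φ(0). Suppose w = (w₁, w₂) ∈ W, with w₁ ∈ ℝ^m and w₂ ∈ ℝ^{m'}, satisfies Φ(w₁) = E'. Then there exists w̆₁ ∈ ℝ^m with w̆₁ ≤ 0 componentwise, (w̆₁, w₂) ∈ W, and Φ(w̆₁)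 = E'. -/
open Matrix

/-
Truncating `w₁` to its negative part `min w₁ 0` keeps `(·, w₂)` in `W`: since `K⁺` and `K⁻` are
nonnegative, `W` contains every vector lying coordinatewise between `0` and a member, and the
truncation has zero positive part and the same negative part. Monotonicity gives
`Φ (min w₁ 0) ≤ Φ w₁ = E' ≤ Φ 0`, so the intermediate value theorem on `κ ↦ Φ (κ • min w₁ 0)`,
`κ ∈ [0, 1]`, yields a scaling attaining `E'`, and it still lies coordinatewise between `0` and `w₁`.
-/

open Set

lemma Matrix.mulVec_le_mulVec_of_nonneg_s11 {ι κ : Type*} [Fintype κ] {M : Matrix ι κ ℝ}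
    (hM : ∀ i j, 0 ≤ M i j) {u v : κ → ℝ} (huv : u ≤ v) : M *ᵥ u ≤ M *ᵥ v :=
  fun i => dotProduct_le_dotProduct_of_nonneg_left huv (hM i)

section PosNegParts

variable {ι : Type*} {u w : ι → ℝ}

lemma vecPos_le_vecPos_of_mem_uIcc (hu : ∀ j, u j ∈ uIcc 0 (w j)) : vecPos u ≤ vecPos w := by
  intro j
  rcases mem_uIcc.mp (hu j) with ⟨h0, h⟩ | ⟨h, h0⟩
  · exact max_le_max_right 0 h
  · exact max_le (h0.trans (le_max_right _ _)) (le_max_right _ _)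

lemma vecNeg_le_vecNeg_of_mem_uIcc (hu : ∀ j, u j ∈ uIcc 0 (w j)) : vecNeg u ≤ vecNeg w := by
  intro j
  rcases mem_uIcc.mp (hu j) with ⟨h0, h⟩ | ⟨h, h0⟩
  · exact max_le ((neg_nonpos.mpr h0).trans (le_max_right _ _)) (le_max_right _ _)
  · exact max_le_max_right 0 (neg_le_neg h)

end PosNegParts

lemma concentration_le_of_mem_uIcc {ι κ : Type*} [Fintype κ] {Kp Kn : Matrix ι κ ℝ}
    (hKp : ∀ i j, 0 ≤ Kp i j) (hKn : ∀ i j, 0 ≤ Kn i j) {b : ι → ℝ} {u w : κ → ℝ}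
    (hw : ∀ i, (Kp *ᵥ vecPos w + Kn *ᵥ vecNeg w) i ≤ b i) (hu : ∀ j, u j ∈ uIcc 0 (w j)) :
    ∀ i, (Kp *ᵥ vecPos u + Kn *ᵥ vecNeg u) i ≤ b i := fun i =>
  (add_le_add (mulVec_le_mulVec_of_nonneg_s11 hKp (vecPos_le_vecPos_of_mem_uIcc hu) i)
    (mulVec_le_mulVec_of_nonneg_s11 hKn (vecNeg_le_vecNeg_of_mem_uIcc hu) i)).trans (hw i)

lemma exists_mem_Icc_apply_smul_eq {E : Type*} [AddCommMonoid E] [Module ℝ E]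
    [TopologicalSpace E] [ContinuousSMul ℝ E] {f : E → ℝ} (hf : Continuous f) {v : E} {c : ℝ}
    (hc : c ∈ Icc (f v) (f 0)) : ∃ κ ∈ Icc (0 : ℝ) 1, f (κ • v) = c := by
  have hseg : Continuous fun κ : ℝ => f (κ • v) := hf.comp (continuous_id.smul continuous_const)
  exact intermediate_value_Icc' zero_le_one hseg.continuousOn (by simpa using hc)

lemma mul_min_zero_mem_uIcc {κ x : ℝ} (hκ : κ ∈ Icc (0 : ℝ) 1) :
    κ * min x 0 ∈ uIcc 0 x := by
  rcases le_total x 0 with hx | hx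
  · rw [min_eq_left hx]
    exact mem_uIcc_of_ge (by nlinarith [hκ.2]) (mul_nonpos_of_nonneg_of_nonpos hκ.1 hx)
  · rw [min_eq_right hx, mul_zero]
    exact left_mem_uIcc

/-- Lemma 2 (discharging case): if `Φ` is continuous and monotone nondecreasing with
`E' ≤ Φ(0)`, and `(w₁, w₂)` belongs to the concentration model `W` with
`Φ(w₁) = E'`, then there is a componentwise nonpositive `w̆₁` with
`(w̆₁, w₂) ∈ W` and `Φ(w̆₁) = E'`. -/
theorem sign_consistent_scenario_nonpos {ℓ m m' : ℕ}
    (Kp Kn : Matrix (Fin ℓ) (Fin m ⊕ Fin m') ℝ)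
    (hKp : ∀ i j, 0 ≤ Kp i j) (hKn : ∀ i j, 0 ≤ Kn i j)
    (b : Fin ℓ → ℝ)
    (W : Set (Fin m ⊕ Fin m' → ℝ))
    (hW : W = {w | ∀ i, (Kp *ᵥ vecPos w + Kn *ᵥ vecNeg w) i ≤ b i})
    (Φ : (Fin m → ℝ) → ℝ) (hcont : Continuous Φ)
    (hmono : ∀ u v : Fin m → ℝ, (∀ i, u i ≤ v i) → Φ u ≤ Φ v)
    (E' : ℝ) (hE : E' ≤ Φ 0)
    (w₁ : Fin m → ℝ) (w₂ : Fin m' → ℝ)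
    (hmem : Sum.elim w₁ w₂ ∈ W) (hΦ : Φ w₁ = E') :
    ∃ w₁' : Fin m → ℝ, (∀ i, w₁' i ≤ 0) ∧ Sum.elim w₁' w₂ ∈ W ∧ Φ w₁' = E' := by
  set v : Fin m → ℝ := fun j => min (w₁ j) 0
  have hv : Φ v ≤ E' := hΦ ▸ hmono v w₁ fun j => min_le_left _ _
  obtain ⟨κ, hκ, hκΦ⟩ := exists_mem_Icc_apply_smul_eq hcont ⟨hv, hE⟩
  refine ⟨κ • v, fun j => mul_nonpos_of_nonneg_of_nonpos hκ.1 (min_le_right _ _), ?_, hκΦ⟩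
  subst hW
  refine concentration_le_of_mem_uIcc hKp hKn hmem fun j => ?_
  cases j with
  | inl j => exact mul_min_zero_mem_uIcc hκ
  | inr j => exact right_mem_uIcc
end
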